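/- arXiv:1807.04805 — 3 statements merged into one kernel-verified Lean document; each statement's English description precedes it below -/
import Mathlib

section
/- Every ultrafilter x on ℕ containing L_2 is either irreducible or a product of two ultrafilters each containing L_1 (i.e., each concentrated on the primes). -/
/-- `L n` : positive naturals with exactly `n` prime factors counted with multiplicity. -/
def L (n : ℕ) : Set ℕ+ := {m : ℕ+ | (m : ℕ).primeFactorsList.length = n}

/-- Product of ultrafilters on `ℕ+`: `A ∈ umul x y ↔ {n | {m | n*m ∈ A} ∈ y} ∈ x`. -/
def umul (x y : Ultrafilter ℕ+) : Ultrafilter ℕ+ :=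
  x.bind fun n => y.map fun m => n * m

/-- tilde-divisibility. -/
def tdvd (u v : Ultrafilter ℕ+) : Prop :=
  ∀ A ∈ u, {m : ℕ+ | ∃ a ∈ A, a ∣ m} ∈ v

/-- irreducible ultrafilter. -/
def Irred (p : Ultrafilter ℕ+) : Prop :=
  p ≠ pure 1 ∧ ∀ x y : Ultrafilter ℕ+, p = umul x y → x = pure 1 ∨ y = pure 1

/-!
Since `Ω(nm) = Ω(n) + Ω(m)`, the sets `L k` behave additively under the product: if `L k ∈ y·z`,
then the finitely many sets `L i`, `i ≤ k`, cover the `n` whose fibre `{m | nm ∈ L k}` lies in `z`,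
so one of them, `L i`, lies in `y`, and then that fibre is `L (k - i)`. For `k = 2`, a
factorisation with neither factor principal at `1 = L 0` therefore forces `i = k - i = 1`.
-/

open ArithmeticFunction
open scoped ArithmeticFunction.Omega

lemma mem_L_iff {k : ℕ} {n : ℕ+} : n ∈ L k ↔ Ω n = k := by
  rw [cardFactors_apply]; rfl

lemma cardFactors_pnat_mul (n m : ℕ+) : Ω (n * m : ℕ+) = Ω n + Ω m :=
  cardFactors_mul n.ne_zero m.ne_zero

lemma L_zero : L 0 = {1} := by
  ext n
  simp [mem_L_iff, cardFactors_eq_zero_iff_eq_zero_or_one]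

lemma L_zero_mem_iff {y : Ultrafilter ℕ+} : L 0 ∈ y ↔ y = pure 1 := by
  refine ⟨fun h => ?_, fun h => h ▸ by simp [L_zero]⟩
  obtain ⟨a, rfl, rfl⟩ := Ultrafilter.eq_pure_of_finite_mem (Set.finite_singleton 1) (L_zero ▸ h)
  rfl

lemma mem_umul {A : Set ℕ+} {y z : Ultrafilter ℕ+} :
    A ∈ umul y z ↔ {n | (n * ·) ⁻¹' A ∈ z} ∈ y :=
  Filter.mem_bind'

lemma preimage_mul_L_subset {i k : ℕ} {n : ℕ+} (hn : n ∈ L i) :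
    (n * ·) ⁻¹' L k ⊆ L (k - i) := by
  intro m hm
  rw [Set.mem_preimage, mem_L_iff, cardFactors_pnat_mul] at hm
  rw [mem_L_iff] at hn ⊢
  omega

lemma exists_L_mem_of_L_mem_umul {k : ℕ} {y z : Ultrafilter ℕ+} (h : L k ∈ umul y z) :
    ∃ i j, i + j = k ∧ L i ∈ y ∧ L j ∈ z := by
  set S := {n | (n * ·) ⁻¹' L k ∈ z}
  have hS : S ∈ y := mem_umul.1 h
  have hcover : S ⊆ ⋃ i ∈ Set.Iic k, L i := by
    intro n hn
    obtain ⟨m, hm⟩ := Ultrafilter.nonempty_of_mem hn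
    rw [Set.mem_preimage, mem_L_iff, cardFactors_pnat_mul] at hm
    exact Set.mem_biUnion (x := Ω n) (by simp only [Set.mem_Iic]; omega) (mem_L_iff.2 rfl)
  obtain ⟨i, hik, hi⟩ :=
    (Ultrafilter.finite_biUnion_mem_iff (Set.finite_Iic k)).1 (Filter.mem_of_superset hS hcover)
  obtain ⟨n, hnS, hni⟩ := Ultrafilter.nonempty_of_mem (Filter.inter_mem hS hi)
  exact ⟨i, k - i, by simp only [Set.mem_Iic] at hik; omega, hi,
    Filter.mem_of_superset hnS (preimage_mul_L_subset hni)⟩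

theorem stmt_6 (x : Ultrafilter ℕ+) (hx : L 2 ∈ x) :
    Irred x ∨ ∃ y z : Ultrafilter ℕ+, L 1 ∈ y ∧ L 1 ∈ z ∧ x = umul y z := by
  refine or_iff_not_imp_left.2 fun hred => ?_
  have hx1 : x ≠ pure 1 := by
    rintro rfl
    simp [mem_L_iff] at hx
  obtain ⟨y, z, rfl, hy, hz⟩ : ∃ y z, x = umul y z ∧ y ≠ pure 1 ∧ z ≠ pure 1 := by
    simpa [Irred, hx1] using hred
  obtain ⟨i, j, hij, hi, hj⟩ := exists_L_mem_of_L_mem_umul hx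
  have hi0 : i ≠ 0 := by rintro rfl; exact hy (L_zero_mem_iff.1 hi)
  have hj0 : j ≠ 0 := by rintro rfl; exact hz (L_zero_mem_iff.1 hj)
  obtain ⟨rfl, rfl⟩ : i = 1 ∧ j = 1 := by omega
  exact ⟨y, z, hi, hj, rfl⟩
end

section
/- For every ultrafilter x with L_n ∈ x there is a chain of ultrafilters x_1, …, x_{n-1} with L_i ∈ x_i such that x_1 ∼∣ x_2 ∼∣ ⋯ ∼∣ x_{n-1} ∼∣ x, where ∼∣ is the tilde-divisibility relation. -/
lemma tdvd_map_map {f g : ℕ+ → ℕ+} (h : ∀ m, f m ∣ g m) (x : Ultrafilter ℕ+) :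
    tdvd (x.map f) (x.map g) := by
  intro A hA
  rw [Ultrafilter.mem_map] at hA ⊢
  exact x.mem_of_superset hA fun m hm => ⟨f m, hm, h m⟩

lemma tdvd_map_self {f : ℕ+ → ℕ+} (h : ∀ m, f m ∣ m) (x : Ultrafilter ℕ+) :
    tdvd (x.map f) x := by
  simpa only [Ultrafilter.map_id] using tdvd_map_map (g := id) h x

def primeTrunc (i : ℕ) (m : ℕ+) : ℕ+ :=
  ⟨((m : ℕ).primeFactorsList.take i).prod, List.prod_pos fun _ hp =>
    (Nat.prime_of_mem_primeFactorsList (List.mem_of_mem_take hp)).pos⟩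

lemma coe_primeTrunc (i : ℕ) (m : ℕ+) :
    (primeTrunc i m : ℕ) = ((m : ℕ).primeFactorsList.take i).prod := rfl

lemma primeTrunc_dvd_primeTrunc {i j : ℕ} (h : i ≤ j) (m : ℕ+) :
    primeTrunc i m ∣ primeTrunc j m := by
  rw [PNat.dvd_iff, coe_primeTrunc, coe_primeTrunc]
  exact (List.take_prefix_take_left h).sublist.prod_dvd_prod

lemma primeTrunc_dvd (i : ℕ) (m : ℕ+) : primeTrunc i m ∣ m := by
  rw [PNat.dvd_iff, coe_primeTrunc]
  simpa only [Nat.prod_primeFactorsList m.ne_zero] using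
    (List.take_prefix i (m : ℕ).primeFactorsList).sublist.prod_dvd_prod

lemma length_primeFactorsList_primeTrunc (i : ℕ) (m : ℕ+) :
    (primeTrunc i m : ℕ).primeFactorsList.length = min i (m : ℕ).primeFactorsList.length := by
  have hperm : ((m : ℕ).primeFactorsList.take i).Perm (primeTrunc i m : ℕ).primeFactorsList :=
    Nat.primeFactorsList_unique rfl fun _ hp =>
      Nat.prime_of_mem_primeFactorsList (List.mem_of_mem_take hp)
  rw [← hperm.length_eq, List.length_take]

lemma primeTrunc_mem_L {i n : ℕ} (hi : i ≤ n) {m : ℕ+} (hm : m ∈ L n) : primeTrunc i m ∈ L i := by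
  simp only [L, Set.mem_ofPred] at hm ⊢
  rw [length_primeFactorsList_primeTrunc, hm, min_eq_left hi]

theorem stmt_13_general (n : ℕ) (x : Ultrafilter ℕ+) (hx : L n ∈ x) :
    ∃ c : ℕ → Ultrafilter ℕ+,
      (∀ i, 1 ≤ i → i < n → L i ∈ c i) ∧
      (∀ i, 1 ≤ i → i + 1 < n → tdvd (c i) (c (i + 1))) ∧
      (2 ≤ n → tdvd (c (n - 1)) x) := by
  refine ⟨fun i => x.map (primeTrunc i), ?_, ?_, ?_⟩
  · intro i _ hin
    exact x.mem_of_superset hx fun m hm => primeTrunc_mem_L hin.le hm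
  · intro i _ _
    exact tdvd_map_map (primeTrunc_dvd_primeTrunc i.le_succ) x
  · intro _
    exact tdvd_map_self (primeTrunc_dvd (n - 1)) x

theorem stmt_13 (n : ℕ) (hn : 1 ≤ n) (x : Ultrafilter ℕ+) (hx : L n ∈ x) :
    ∃ c : ℕ → Ultrafilter ℕ+,
      (∀ i, 1 ≤ i → i < n → L i ∈ c i) ∧
      (∀ i, 1 ≤ i → i + 1 < n → tdvd (c i) (c (i + 1))) ∧
      (2 ≤ n → tdvd (c (n - 1)) x) :=
  stmt_13_general n x hx
end

section
/- For every ultrafilter x that is not on a finite level (L_i ∉ x for all i) and every n, there exists an ultrafilter y with L_n ∈ y such that y tilde-divides x. -/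
/-!
Since `x` contains no `L i`, it contains `{m | n ≤ Ω(m)}`, the complement of the finite union
`L 0 ∪ … ∪ L (n-1)`. Sending `m` to the product of its `n` smallest prime factors (its smallest
divisor in `L n` when `Ω(m) ≥ n`) pushes `x` forward to an ultrafilter containing `L n`, and it
tilde-divides `x` because every value of the map divides its argument.
-/

lemma Ultrafilter.setOf_le_mem_of_forall_fiber_notMem {α : Type*} (x : Ultrafilter α) (f : α → ℕ)
    (hf : ∀ i, f ⁻¹' {i} ∉ x) (n : ℕ) : {a | n ≤ f a} ∈ x := by
  by_contra h
  have hlt : (⋃ i ∈ Finset.range n, f ⁻¹' {i}) ∈ x :=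
    Filter.mem_of_superset (Ultrafilter.compl_mem_iff_notMem.mpr h) fun a ha => by simpa using ha
  obtain ⟨i, -, hi⟩ := (Ultrafilter.finite_biUnion_mem_iff (Finset.range n).finite_toSet).mp hlt
  exact hf i hi

lemma tdvd_map_of_forall_dvd (x : Ultrafilter ℕ+) (f : ℕ+ → ℕ+) (hf : ∀ m, f m ∣ m) :
    tdvd (x.map f) x := fun _ hA =>
  Filter.mem_of_superset (Ultrafilter.mem_map.mp hA) fun m hm => ⟨f m, hm, hf m⟩

lemma Nat.primeFactorsList_prod_length {l : List ℕ} (hl : ∀ p ∈ l, p.Prime) :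
    (l.prod).primeFactorsList.length = l.length :=
  (Nat.primeFactorsList_unique rfl hl).length_eq.symm

lemma Nat.prime_of_mem_take_primeFactorsList {n m p : ℕ} (hp : p ∈ m.primeFactorsList.take n) :
    p.Prime :=
  Nat.prime_of_mem_primeFactorsList (List.mem_of_mem_take hp)

def prodFirstPrimeFactors (n : ℕ) (m : ℕ+) : ℕ+ :=
  ⟨((m : ℕ).primeFactorsList.take n).prod,
    List.prod_pos fun _ hp => (Nat.prime_of_mem_take_primeFactorsList hp).pos⟩

lemma prodFirstPrimeFactors_dvd (n : ℕ) (m : ℕ+) : prodFirstPrimeFactors n m ∣ m := by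
  rw [PNat.dvd_iff]
  calc ((m : ℕ).primeFactorsList.take n).prod ∣ (m : ℕ).primeFactorsList.prod :=
        (List.take_sublist n _).prod_dvd_prod
    _ = m := Nat.prod_primeFactorsList m.ne_zero

lemma prodFirstPrimeFactors_mem_L {n : ℕ} {m : ℕ+} (hm : n ≤ (m : ℕ).primeFactorsList.length) :
    prodFirstPrimeFactors n m ∈ L n := by
  change (((m : ℕ).primeFactorsList.take n).prod).primeFactorsList.length = n
  rw [Nat.primeFactorsList_prod_length fun _ => Nat.prime_of_mem_take_primeFactorsList,
    List.length_take, min_eq_left hm]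

theorem stmt_17 (x : Ultrafilter ℕ+) (hx : ∀ i : ℕ, L i ∉ x) (n : ℕ) :
    ∃ y : Ultrafilter ℕ+, L n ∈ y ∧ tdvd y x := by
  have hlarge : {m : ℕ+ | n ≤ (m : ℕ).primeFactorsList.length} ∈ x :=
    x.setOf_le_mem_of_forall_fiber_notMem _ hx n
  refine ⟨x.map (prodFirstPrimeFactors n), ?_,
    tdvd_map_of_forall_dvd x _ (prodFirstPrimeFactors_dvd n)⟩
  exact Ultrafilter.mem_map.mpr
    (Filter.mem_of_superset hlarge fun _ => prodFirstPrimeFactors_mem_L)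
end
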